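/- Each third-mode slice of the tensor built from the samples x_n = Σ_k a_k e^{-iω_k(n-1)} factors as A D_i B^T, where A and B are Vandermonde matrices and D_i is the diagonal matrix diag(a_k e^{-iω_k(i-1)}). -/

import Mathlib

/-! A shift of the sample index by `p + i + n` multiplies the `k`-th exponential mode by
`z_k^p z_k^i z_k^n` with `z_k = e^{-iω_k}`; the three factors are read off as the entries of
`B`, `D_i` and `A`. -/

open Matrix

theorem Matrix.mul_diagonal_mul_transpose_apply {m l K R : Type*} [Fintype K] [DecidableEq K]
    [CommSemiring R] (A : Matrix m K R) (d : K → R) (B : Matrix l K R) (n : m) (j : l) :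
    (A * diagonal d * Bᵀ) n j = ∑ k, A n k * d k * B j k := by
  rw [mul_apply]
  simp only [mul_diagonal, transpose_apply]

theorem Complex.exp_mul_natCast_add_add {ι : Type*} (c : ι → ℂ) (k : ι) (p i n : ℕ) :
    exp (c k * ((p + i + n : ℕ) : ℂ)) = exp (c k * n) * exp (c k * i) * exp (c k * p) := by
  push_cast
  rw [mul_add, mul_add, exp_add, exp_add]
  ring

/-- 0-based indexing: sample `x m` is the paper's `x_{m+1}`, slice `X i` is the paper's
`X(:,:,i+1)`, and column `ℓ` of a slice holds the window starting at `x (L - 1 - ℓ + i)`. -/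
theorem slice_factorization_general (N L P K : ℕ)
    (ω : Fin K → ℝ) (a : Fin K → ℂ)
    (x : ℕ → ℂ) (hx : ∀ n : ℕ, x n = ∑ k, a k * Complex.exp (-Complex.I * ω k * n))
    (A : Matrix (Fin (N - L - P + 2)) (Fin K) ℂ)
    (hA : ∀ n k, A n k = Complex.exp (-Complex.I * ω k * n))
    (B : Matrix (Fin L) (Fin K) ℂ)
    (hB : ∀ ℓ k, B ℓ k = Complex.exp (-Complex.I * ω k * ((L - 1 - (ℓ : ℕ) : ℕ) : ℂ)))
    (D : Fin P → Matrix (Fin K) (Fin K) ℂ)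
    (hD : ∀ i, D i = Matrix.diagonal (fun k => a k * Complex.exp (-Complex.I * ω k * i)))
    (X : Fin P → Matrix (Fin (N - L - P + 2)) (Fin L) ℂ)
    (hX : ∀ i n ℓ, X i n ℓ = x ((L - 1 - (ℓ : ℕ)) + (i : ℕ) + (n : ℕ))) :
    ∀ i, X i = A * D i * B.transpose := by
  intro i
  ext n ℓ
  rw [hX, hx, hD, mul_diagonal_mul_transpose_apply]
  refine Finset.sum_congr rfl fun k _ => ?_
  rw [hA, hB, Complex.exp_mul_natCast_add_add (fun k => -Complex.I * ω k)]
  ring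

/-- Each third-mode slice of the structured tensor built from the samples
`x_n = Σ_k a_k e^{-iω_k (n-1)}` factors as `X(:,:,i) = A D_i Bᵀ`, where `A` and `B` are
Vandermonde matrices and `D_i = diag(a_k e^{-iω_k (i-1)})`. All indices are 0-based:
sample `x m` corresponds to `x_{m+1}`, so `x m = Σ_k a_k e^{-iω_k m}`, the slice entry is
`X i n ℓ = x ((L - 1 - ℓ) + i + n)`, `A n k = e^{-iω_k n}`, `B ℓ k = e^{-iω_k (L-1-ℓ)}`. -/
theorem slice_factorization (N L P K : ℕ) (hN : L + P ≤ N)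
    (ω : Fin K → ℝ) (a : Fin K → ℂ)
    (x : ℕ → ℂ) (hx : ∀ n : ℕ, x n = ∑ k, a k * Complex.exp (-Complex.I * ω k * n))
    (A : Matrix (Fin (N - L - P + 2)) (Fin K) ℂ)
    (hA : ∀ n k, A n k = Complex.exp (-Complex.I * ω k * n))
    (B : Matrix (Fin L) (Fin K) ℂ)
    (hB : ∀ ℓ k, B ℓ k = Complex.exp (-Complex.I * ω k * ((L - 1 - (ℓ : ℕ) : ℕ) : ℂ)))
    (D : Fin P → Matrix (Fin K) (Fin K) ℂ)
    (hD : ∀ i, D i = Matrix.diagonal (fun k => a k * Complex.exp (-Complex.I * ω k * i)))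
    (X : Fin P → Matrix (Fin (N - L - P + 2)) (Fin L) ℂ)
    (hX : ∀ i n ℓ, X i n ℓ = x ((L - 1 - (ℓ : ℕ)) + (i : ℕ) + (n : ℕ))) :
    ∀ i, X i = A * D i * B.transpose :=
  slice_factorization_general N L P K ω a x hx A hA B hB D hD X hX
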